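/- Let λ > 0 and β ∈ (0,1). For any embeddings U, V and weight matrix W ∈ ℝ^{k×k} such that U and V are not both zero, the rescaled point (βU, βV, β⁻²W) satisfies F(βU, βV, β⁻²W) < F(U, V, W), where F is the generalized CF objective with the outer-product interaction f(u,v) = u ⊗ v. In particular, Σ_{a,b} (β⁻²W)_{ab} (βu_i)_a (βv_j)_b = Σ_{a,b} W_{ab} (u_i)_a (v_j)_b = u_iᵀ W v_j for every (i,j), so the data-fitting term is unchanged while the regularization term is strictly decreased; hence no point with U and V not both zero is a global minimizer. -/
import Mathlib


open Finset

/-- Generalized CF objective with the outer-product interaction `f(u,v) = u ⊗ v` and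
weight matrix `W`, so the linear predictor is `⟨W, u_i ⊗ v_j⟩ = u_iᵀ W v_j`:
`F(U,V,W) = Σ_{(i,j)∈Ω} ℓ(u_iᵀ W v_j, O_{ij}) + (λ/2)Σ_i ‖u_i‖² + (λ/2)Σ_j ‖v_j‖²`. -/
noncomputable def cfObjOuter {k m n : ℕ} (lam : ℝ) (Ω : Finset (Fin m × Fin n))
    (O : Fin m × Fin n → ℝ) (ℓ : ℝ × ℝ → ℝ)
    (U : Fin m → Fin k → ℝ) (V : Fin n → Fin k → ℝ) (W : Fin k → Fin k → ℝ) : ℝ :=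
  (∑ p ∈ Ω, ℓ (∑ a, ∑ b, W a b * (U p.1 a * V p.2 b), O p))
    + lam / 2 * ∑ i, ∑ l, (U i l) ^ 2
    + lam / 2 * ∑ j, ∑ l, (V j l) ^ 2

/-- For `λ > 0` and `β ∈ (0,1)`, if `U` and `V` are not both zero, then
`F(βU, βV, β⁻²W) < F(U, V, W)` for the outer-product interaction; the data-fitting term
is unchanged (since `Σ_{a,b} (β⁻²W)_{ab}(βu_i)_a(βv_j)_b = u_iᵀ W v_j`) while the
regularization term strictly decreases; hence no point with `U` and `V` not both zero
is a global minimizer. -/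
theorem rescaling_decreases_outer_objective {k m n : ℕ} (lam : ℝ) (hlam : 0 < lam)
    (β : ℝ) (hβ : β ∈ Set.Ioo (0 : ℝ) 1)
    (Ω : Finset (Fin m × Fin n)) (O : Fin m × Fin n → ℝ) (ℓ : ℝ × ℝ → ℝ)
    (U : Fin m → Fin k → ℝ) (V : Fin n → Fin k → ℝ) (W : Fin k → Fin k → ℝ)
    (hUV : ¬ (U = 0 ∧ V = 0)) :
    cfObjOuter lam Ω O ℓ (fun i l => β * U i l) (fun j l => β * V j l)
        (fun a b => (β ^ 2)⁻¹ * W a b)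
      < cfObjOuter lam Ω O ℓ U V W ∧
    (∀ i j, (∑ a, ∑ b, ((β ^ 2)⁻¹ * W a b) * ((β * U i a) * (β * V j b)))
        = ∑ a, ∑ b, W a b * (U i a * V j b)) ∧
    (lam / 2 * ∑ i, ∑ l, (β * U i l) ^ 2 + lam / 2 * ∑ j, ∑ l, (β * V j l) ^ 2
      < lam / 2 * ∑ i, ∑ l, (U i l) ^ 2 + lam / 2 * ∑ j, ∑ l, (V j l) ^ 2) ∧
    (∃ (U' : Fin m → Fin k → ℝ) (V' : Fin n → Fin k → ℝ) (W' : Fin k → Fin k → ℝ),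
      cfObjOuter lam Ω O ℓ U' V' W' < cfObjOuter lam Ω O ℓ U V W) := by
  obtain ⟨hβ0, hβ1⟩ := hβ
  have hβne : β ≠ 0 := ne_of_gt hβ0
  have hpred : ∀ (i : Fin m) (j : Fin n),
      (∑ a, ∑ b, ((β ^ 2)⁻¹ * W a b) * ((β * U i a) * (β * V j b)))
        = ∑ a, ∑ b, W a b * (U i a * V j b) := by
    intro i j
    refine Finset.sum_congr rfl fun a _ => Finset.sum_congr rfl fun b _ => ?_
    field_simp
  -- positivity of the total square sum
  have hS : (0:ℝ) < (∑ i, ∑ l, (U i l) ^ 2) + (∑ j, ∑ l, (V j l) ^ 2) := by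
    have h1 : (0:ℝ) ≤ ∑ i, ∑ l, (U i l) ^ 2 :=
      Finset.sum_nonneg fun i _ => Finset.sum_nonneg fun l _ => sq_nonneg _
    have h2 : (0:ℝ) ≤ ∑ j, ∑ l, (V j l) ^ 2 :=
      Finset.sum_nonneg fun j _ => Finset.sum_nonneg fun l _ => sq_nonneg _
    rcases (lt_or_eq_of_le h1).symm with h1e | h1p
    · rcases (lt_or_eq_of_le h2).symm with h2e | h2p
      · exfalso
        apply hUV
        constructor
        · funext i l
          have := (Finset.sum_eq_zero_iff_of_nonneg
            (fun i _ => Finset.sum_nonneg fun l _ => sq_nonneg (U i l))).mp h1e.symm i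
            (Finset.mem_univ i)
          have := (Finset.sum_eq_zero_iff_of_nonneg
            (fun l _ => sq_nonneg (U i l))).mp this l (Finset.mem_univ l)
          simpa using pow_eq_zero_iff (n := 2) (by norm_num) |>.mp this
        · funext j l
          have := (Finset.sum_eq_zero_iff_of_nonneg
            (fun j _ => Finset.sum_nonneg fun l _ => sq_nonneg (V j l))).mp h2e.symm j
            (Finset.mem_univ j)
          have := (Finset.sum_eq_zero_iff_of_nonneg
            (fun l _ => sq_nonneg (V j l))).mp this l (Finset.mem_univ l)
          simpa using pow_eq_zero_iff (n := 2) (by norm_num) |>.mp this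
      · linarith
    · linarith
  have hreg : lam / 2 * ∑ i, ∑ l, (β * U i l) ^ 2 + lam / 2 * ∑ j, ∑ l, (β * V j l) ^ 2
      < lam / 2 * ∑ i, ∑ l, (U i l) ^ 2 + lam / 2 * ∑ j, ∑ l, (V j l) ^ 2 := by
    have e1 : (∑ i, ∑ l, (β * U i l) ^ 2) = β ^ 2 * ∑ i, ∑ l, (U i l) ^ 2 := by
      rw [Finset.mul_sum]
      refine Finset.sum_congr rfl fun i _ => ?_
      rw [Finset.mul_sum]
      exact Finset.sum_congr rfl fun l _ => by ring
    have e2 : (∑ j, ∑ l, (β * V j l) ^ 2) = β ^ 2 * ∑ j, ∑ l, (V j l) ^ 2 := by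
      rw [Finset.mul_sum]
      refine Finset.sum_congr rfl fun j _ => ?_
      rw [Finset.mul_sum]
      exact Finset.sum_congr rfl fun l _ => by ring
    rw [e1, e2]
    have hβsq : β ^ 2 < 1 := by nlinarith
    nlinarith [mul_pos hlam hS]
  have hF : cfObjOuter lam Ω O ℓ (fun i l => β * U i l) (fun j l => β * V j l)
        (fun a b => (β ^ 2)⁻¹ * W a b) < cfObjOuter lam Ω O ℓ U V W := by
    unfold cfObjOuter
    have hfit : (∑ p ∈ Ω, ℓ (∑ a, ∑ b, ((β ^ 2)⁻¹ * W a b) * ((β * U p.1 a) * (β * V p.2 b)), O p))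
        = ∑ p ∈ Ω, ℓ (∑ a, ∑ b, W a b * (U p.1 a * V p.2 b), O p) := by
      refine Finset.sum_congr rfl fun p _ => ?_
      rw [hpred p.1 p.2]
    rw [hfit]
    linarith
  exact ⟨hF, hpred, hreg, _, _, _, hF⟩
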